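/- Let M, N be positive reals with M ≤ N, and K a real with N/M < K ≤ N/M + 1. For α ∈ [1/2, 1], the inequality Mα + (N-M)(1-α)/(K-1) ≤ M(1-α) + Nα/K holds if and only if α ≤ K/(2K-1). -/

import Mathlib

/-! Clearing the denominators `K (K - 1)`, the right side minus the left side factors as
`(M K - N) (K - (2K - 1) α)`; since `N < M K`, its sign is that of `K/(2K - 1) - α`. -/

lemma outerBound_gap_eq (M N K α : ℝ) (hK₀ : K ≠ 0) (hK₁ : K - 1 ≠ 0) :
    M * (1 - α) + N * α / K - (M * α + (N - M) * (1 - α) / (K - 1)) =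
      (M * K - N) * (K - (2 * K - 1) * α) / (K * (K - 1)) := by
  field_simp
  ring

lemma outerBound_le_iff {M N K : ℝ} (hK : 1 < K) (hNK : N < M * K) (α : ℝ) :
    M * α + (N - M) * (1 - α) / (K - 1) ≤ M * (1 - α) + N * α / K ↔
      α ≤ K / (2 * K - 1) := by
  have hK₀ : 0 < K := by linarith
  have hK₁ : 0 < K - 1 := by linarith
  rw [← sub_nonneg, outerBound_gap_eq M N K α hK₀.ne' hK₁.ne',
    le_div_iff₀ (mul_pos hK₀ hK₁), zero_mul, mul_nonneg_iff_of_pos_left (by linarith),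
    le_div_iff₀ (by linarith), sub_nonneg, mul_comm]

theorem stmt_1_general (M N K : ℝ) (hM : 0 < M) (hMN : M ≤ N)
    (hK1 : N / M < K)
    (α : ℝ) :
    M * α + (N - M) * (1 - α) / (K - 1) ≤ M * (1 - α) + N * α / K ↔
      α ≤ K / (2 * K - 1) := by
  have hK : 1 < K := ((one_le_div hM).2 hMN).trans_lt hK1
  have hNK : N < M * K := by rwa [div_lt_iff₀ hM, mul_comm] at hK1
  exact outerBound_le_iff hK hNK α

theorem stmt_1 (M N K : ℝ) (hM : 0 < M) (hN : 0 < N) (hMN : M ≤ N)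
    (hK1 : N / M < K) (hK2 : K ≤ N / M + 1)
    (α : ℝ) (hα0 : 1/2 ≤ α) (hα1 : α ≤ 1) :
    M * α + (N - M) * (1 - α) / (K - 1) ≤ M * (1 - α) + N * α / K ↔
      α ≤ K / (2 * K - 1) :=
  stmt_1_general M N K hM hMN hK1 α
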